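/- arXiv:1402.6099 — 3 statements merged into one kernel-verified Lean document; each statement's English description precedes it below -/
import Mathlib

section
/- If X and Y are vertical vector fields on the big-tangent manifold of a Finsler space both satisfying g_ij X₁ⁱ yʲ + g*ⁱʲ X²_i p_j = 0 (i.e. X, Y ∈ Γ(V_E)), then their Lie bracket satisfies G([X,Y], E) = 0; hence the vertical Liouville distribution V_E is integrable. -/
open scoped BigOperators

/-!
Differentiating the identity `G(W, E) = 0` in a direction `v` gives `G(dW v, E) + G(W, v) = 0`:
the terms carrying derivatives of `g` and `g*` vanish because these tensors are
homogeneous of degree zero (`∂_k g_ij yʲ = 0`), and `E` is the identity map of the fibre.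
Since `[X,Y] = dY X - dX Y`, this gives `G([X,Y], E) = -G(Y, X) + G(X, Y)`, which vanishes
by the symmetry of `G`.
-/

/-- A point of a fibre of the big-tangent manifold: `z ∘ Sum.inl = y` are the
vector coordinates, `z ∘ Sum.inr = p` the covector coordinates. -/
abbrev BigFibre (n : ℕ) := (Fin n ⊕ Fin n) → ℝ

/-- The metric `G(X,Y) = g_ij X₁ⁱ Y₁ʲ + g*ⁱʲ X²_i Y²_j` on the vertical bundle,
induced by the Finsler fundamental tensor `g` and its `L`-dual Cartan tensor `gs`. -/
noncomputable def vertMetric {n : ℕ}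
    (g gs : (Fin n → ℝ) → Fin n → Fin n → ℝ) (z : BigFibre n)
    (u v : (Fin n ⊕ Fin n) → ℝ) : ℝ :=
  (∑ i, ∑ j, g (fun a => z (Sum.inl a)) i j * u (Sum.inl i) * v (Sum.inl j))
    + ∑ i, ∑ j, gs (fun a => z (Sum.inr a)) i j * u (Sum.inr i) * v (Sum.inr j)

/-- The fibrewise Lie bracket of two vertical vector fields on the
big-tangent manifold. -/
noncomputable def vertBracket {n : ℕ}
    (X Y : BigFibre n → (Fin n ⊕ Fin n) → ℝ) (z : BigFibre n)
    (a : Fin n ⊕ Fin n) : ℝ :=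
  (∑ b, X z b * fderiv ℝ (fun w => Y w a) z (Pi.single b 1))
    - ∑ b, Y z b * fderiv ℝ (fun w => X w a) z (Pi.single b 1)

open Finset

theorem ContinuousLinearMap.apply_eq_sum_mul_single {ι : Type*} [Fintype ι] [DecidableEq ι]
    (L : (ι → ℝ) →L[ℝ] ℝ) (x : ι → ℝ) : L x = ∑ i, x i * L (Pi.single i 1) := by
  conv_lhs => rw [← univ_sum_single x]
  simp only [map_sum]
  refine sum_congr rfl fun i _ => ?_
  rw [← smul_eq_mul, ← map_smul, ← Pi.single_smul, smul_eq_mul, mul_one]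

theorem hasFDerivAt_comp_precomp {ι κ : Type*} [Fintype ι] [Fintype κ] (e : κ → ι)
    (f : (κ → ℝ) → ℝ) (z : ι → ℝ)
    (hf : DifferentiableAt ℝ f (fun a => z (e a))) :
    HasFDerivAt (fun w : ι → ℝ => f (fun a => w (e a)))
      ((fderiv ℝ f (fun a => z (e a))).comp
        (ContinuousLinearMap.pi fun a => ContinuousLinearMap.proj (e a))) z :=
  hf.hasFDerivAt.comp z (hasFDerivAt_pi.2 fun a => hasFDerivAt_apply (e a) z)

noncomputable def pullbackForm {ι κ : Type*} [Fintype κ] (h : (κ → ℝ) → κ → κ → ℝ)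
    (e : κ → ι) (w u v : ι → ℝ) : ℝ :=
  ∑ i, ∑ j, h (fun a => w (e a)) i j * u (e i) * v (e j)

section pullbackForm

variable {ι κ : Type*} [Fintype κ] (h : (κ → ℝ) → κ → κ → ℝ) (e : κ → ι)

theorem pullbackForm_sub_left (w u u' v : ι → ℝ) :
    pullbackForm h e w (u - u') v = pullbackForm h e w u v - pullbackForm h e w u' v := by
  simp only [pullbackForm, Pi.sub_apply, mul_sub, sub_mul, sum_sub_distrib]

theorem pullbackForm_comm (hsymm : ∀ w i j, h w i j = h w j i) (w u v : ι → ℝ) :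
    pullbackForm h e w u v = pullbackForm h e w v u := by
  unfold pullbackForm
  rw [sum_comm]
  refine sum_congr rfl fun i _ => sum_congr rfl fun j _ => ?_
  rw [hsymm]; ring

theorem sum_fderiv_mul_eq_zero [DecidableEq κ]
    (hom : ∀ (w : κ → ℝ) i k,
      ∑ j, fderiv ℝ (fun u => h u i j) w (Pi.single k 1) * w j = 0)
    (w : κ → ℝ) (i : κ) (v : κ → ℝ) :
    ∑ j, fderiv ℝ (fun u => h u i j) w v * w j = 0 := by
  simp_rw [ContinuousLinearMap.apply_eq_sum_mul_single _ v, sum_mul, mul_assoc]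
  rw [sum_comm]
  simp_rw [← mul_sum, hom, mul_zero, sum_const_zero]

theorem fderiv_pullbackForm_self [Fintype ι] [DecidableEq κ]
    (hdiff : ∀ i j, Differentiable ℝ (fun w => h w i j))
    (hom : ∀ (w : κ → ℝ) i k,
      ∑ j, fderiv ℝ (fun u => h u i j) w (Pi.single k 1) * w j = 0)
    (W : (ι → ℝ) → ι → ℝ) (hW : ∀ a, Differentiable ℝ (fun z => W z a))
    (z v : ι → ℝ) :
    fderiv ℝ (fun w => pullbackForm h e w (W w) w) z v
      = pullbackForm h e z (fderiv ℝ W z v) z + pullbackForm h e z (W z) v := by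
  have hWz : DifferentiableAt ℝ W z := differentiableAt_pi.2 fun a => hW a z
  have H := HasFDerivAt.fun_sum (u := univ) fun i _ => HasFDerivAt.fun_sum (u := univ) fun j _ =>
    ((hasFDerivAt_comp_precomp e _ z (hdiff i j _)).fun_mul (hW (e i) z).hasFDerivAt).fun_mul
      (hasFDerivAt_apply (e j) z)
  change fderiv ℝ (fun w => ∑ i, ∑ j, h (fun a => w (e a)) i j * W w (e i) * w (e j)) z v = _
  rw [H.fderiv]
  simp only [_root_.sum_apply, add_apply, smul_apply, ContinuousLinearMap.comp_apply, smul_eq_mul,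
    fderiv_apply hWz]
  have hpi : (ContinuousLinearMap.pi fun a => ContinuousLinearMap.proj (R := ℝ) (e a)) v =
      fun a => v (e a) := rfl
  simp only [ContinuousLinearMap.proj_apply, hpi, mul_add, sum_add_distrib]
  -- homogeneity: the derivative of the coefficients is annihilated by the base point
  have hC : ∑ i, ∑ j, z (e j) * (W z (e i) *
      fderiv ℝ (fun w => h w i j) (fun a => z (e a)) (fun a => v (e a))) = 0 := by
    refine sum_eq_zero fun i _ => ?_
    rw [← mul_zero (W z (e i)), ← sum_fderiv_mul_eq_zero h hom _ i (fun a => v (e a)), mul_sum]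
    exact sum_congr rfl fun j _ => by ring
  rw [hC, add_zero, add_comm]
  congr 1; exact sum_congr rfl fun i _ => sum_congr rfl fun j _ => by ring

theorem differentiable_pullbackForm_self [Fintype ι]
    (hdiff : ∀ i j, Differentiable ℝ (fun w => h w i j))
    (W : (ι → ℝ) → ι → ℝ) (hW : ∀ a, Differentiable ℝ (fun z => W z a)) :
    Differentiable ℝ (fun w => pullbackForm h e w (W w) w) := by
  unfold pullbackForm
  fun_prop

end pullbackForm

section vertMetric

variable {n : ℕ} (g gs : (Fin n → ℝ) → Fin n → Fin n → ℝ)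

theorem vertMetric_eq_add (z u v : BigFibre n) :
    vertMetric g gs z u v = pullbackForm g Sum.inl z u v + pullbackForm gs Sum.inr z u v := rfl

theorem vertMetric_sub_left (z u u' v : BigFibre n) :
    vertMetric g gs z (u - u') v = vertMetric g gs z u v - vertMetric g gs z u' v := by
  simp only [vertMetric_eq_add, pullbackForm_sub_left]
  ring

theorem vertMetric_comm (hgsym : ∀ w i j, g w i j = g w j i)
    (hgssym : ∀ w i j, gs w i j = gs w j i) (z u v : BigFibre n) :
    vertMetric g gs z u v = vertMetric g gs z v u := by
  simp only [vertMetric_eq_add, pullbackForm_comm _ _ hgsym, pullbackForm_comm _ _ hgssym]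

theorem fderiv_vertMetric_self
    (hgdiff : ∀ i j, Differentiable ℝ (fun w => g w i j))
    (hgsdiff : ∀ i j, Differentiable ℝ (fun w => gs w i j))
    (hghom : ∀ (w : Fin n → ℝ) i k,
      ∑ j, fderiv ℝ (fun u => g u i j) w (Pi.single k 1) * w j = 0)
    (hgshom : ∀ (w : Fin n → ℝ) i k,
      ∑ j, fderiv ℝ (fun u => gs u i j) w (Pi.single k 1) * w j = 0)
    (W : BigFibre n → BigFibre n) (hW : ∀ a, Differentiable ℝ (fun z => W z a))
    (z v : BigFibre n) :
    fderiv ℝ (fun w => vertMetric g gs w (W w) w) z v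
      = vertMetric g gs z (fderiv ℝ W z v) z + vertMetric g gs z (W z) v := by
  simp only [vertMetric_eq_add]
  rw [fderiv_fun_add (differentiable_pullbackForm_self g _ hgdiff W hW z)
    (differentiable_pullbackForm_self gs _ hgsdiff W hW z), add_apply,
    fderiv_pullbackForm_self g _ hgdiff hghom W hW,
    fderiv_pullbackForm_self gs _ hgsdiff hgshom W hW]
  ring

theorem vertMetric_fderiv_add_eq_zero
    (hgdiff : ∀ i j, Differentiable ℝ (fun w => g w i j))
    (hgsdiff : ∀ i j, Differentiable ℝ (fun w => gs w i j))
    (hghom : ∀ (w : Fin n → ℝ) i k,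
      ∑ j, fderiv ℝ (fun u => g u i j) w (Pi.single k 1) * w j = 0)
    (hgshom : ∀ (w : Fin n → ℝ) i k,
      ∑ j, fderiv ℝ (fun u => gs u i j) w (Pi.single k 1) * w j = 0)
    (W : BigFibre n → BigFibre n) (hW : ∀ a, Differentiable ℝ (fun z => W z a))
    (hWE : ∀ z, vertMetric g gs z (W z) z = 0) (z v : BigFibre n) :
    vertMetric g gs z (fderiv ℝ W z v) z + vertMetric g gs z (W z) v = 0 := by
  rw [← fderiv_vertMetric_self g gs hgdiff hgsdiff hghom hgshom W hW, funext hWE]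
  simp

theorem vertBracket_eq {X Y : BigFibre n → BigFibre n}
    (hXdiff : ∀ a, Differentiable ℝ (fun z => X z a))
    (hYdiff : ∀ a, Differentiable ℝ (fun z => Y z a)) (z : BigFibre n) :
    vertBracket X Y z = fderiv ℝ Y z (X z) - fderiv ℝ X z (Y z) := by
  ext a
  rw [vertBracket, fderiv_apply (differentiableAt_pi.2 fun b => hXdiff b z),
    fderiv_apply (differentiableAt_pi.2 fun b => hYdiff b z),
    ← ContinuousLinearMap.apply_eq_sum_mul_single,
    ← ContinuousLinearMap.apply_eq_sum_mul_single]
  rfl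

end vertMetric

/-- Theorem 2.2: if the vertical fields `X, Y` satisfy `G(X,E) = G(Y,E) = 0`,
then `G([X,Y],E) = 0`; hence the vertical Liouville distribution `V_E`
is integrable. -/
theorem liouville_distribution_integrable {n : ℕ}
    (g gs : (Fin n → ℝ) → Fin n → Fin n → ℝ)
    (X Y : BigFibre n → (Fin n ⊕ Fin n) → ℝ)
    (hgsym : ∀ w i j, g w i j = g w j i)
    (hgssym : ∀ w i j, gs w i j = gs w j i)
    (hgdiff : ∀ i j, Differentiable ℝ (fun w => g w i j))
    (hgsdiff : ∀ i j, Differentiable ℝ (fun w => gs w i j))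
    (hXdiff : ∀ a, Differentiable ℝ (fun z => X z a))
    (hYdiff : ∀ a, Differentiable ℝ (fun z => Y z a))
    (hghom : ∀ (w : Fin n → ℝ) i k,
      ∑ j, fderiv ℝ (fun u => g u i j) w (Pi.single k 1) * w j = 0)
    (hgshom : ∀ (w : Fin n → ℝ) i k,
      ∑ j, fderiv ℝ (fun u => gs u i j) w (Pi.single k 1) * w j = 0)
    (hX : ∀ z : BigFibre n, vertMetric g gs z (X z) z = 0)
    (hY : ∀ z : BigFibre n, vertMetric g gs z (Y z) z = 0) :
    ∀ z : BigFibre n, vertMetric g gs z (vertBracket X Y z) z = 0 := by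
  intro z
  have hXY := vertMetric_fderiv_add_eq_zero g gs hgdiff hgsdiff hghom hgshom X hXdiff hX z (Y z)
  have hYX := vertMetric_fderiv_add_eq_zero g gs hgdiff hgsdiff hghom hgshom Y hYdiff hY z (X z)
  rw [vertMetric_comm g gs hgsym hgssym z (Y z)] at hYX
  rw [vertBracket_eq hXdiff hYdiff, vertMetric_sub_left]
  linarith
end

section
/- The Liouville fields satisfy ∇_{E₁}E₁ = E₁, ∇_{E₁}E₂ = ∇_{E₂}E₁ = 0, ∇_{E₂}E₂ = E₂ on any leaf L_V; consequently the leaves of the foliation spanned by {E₁, E₂} are totally geodesic submanifolds of the leaves of the vertical foliation V. -/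
open scoped BigOperators

variable {m : Type*} [Fintype m] [DecidableEq m]

/-- Partial derivative in the `i`-th coordinate direction. -/
noncomputable def pd (f : (m → ℝ) → ℝ) (z : m → ℝ) (i : m) : ℝ :=
  fderiv ℝ f z (Pi.single i 1)

/-- Covariant derivative `(∇_X Y)ᵏ` for Christoffel symbols `Γ`. -/
noncomputable def covDeriv (Γ : (m → ℝ) → m → m → m → ℝ)
    (X Y : (m → ℝ) → m → ℝ) (z : m → ℝ) (k : m) : ℝ :=
  (∑ i, X z i * pd (fun w => Y w k) z i)
    + ∑ i, ∑ j, Γ z k i j * X z i * Y z j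

/-- The first Liouville field `E₁ = yⁱ ∂/∂yⁱ` on a fibre of the big-tangent
manifold (`inl` = `y`-indices, `inr` = `p`-indices). -/
def liouvilleE1 {n : ℕ} (z : (Fin n ⊕ Fin n) → ℝ) : (Fin n ⊕ Fin n) → ℝ
  | .inl i => z (Sum.inl i)
  | .inr _ => 0

/-- The second Liouville field `E₂ = p_i ∂/∂p_i`. -/
def liouvilleE2 {n : ℕ} (z : (Fin n ⊕ Fin n) → ℝ) : (Fin n ⊕ Fin n) → ℝ
  | .inl _ => 0
  | .inr i => z (Sum.inr i)

/-!
`∇_X Y = X(Yᵏ) + Γᵏ_ij Xⁱ Yʲ`. For `Y = γ E₁ + δ E₂` the Christoffel term vanishes for every `X`: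
there are no mixed symbols, and `E₁`, `E₂` are killed by the `y`- and `p`-blocks respectively.
The derivative term is computed from the fact that `E₁` and `E₂` are the two complementary
coordinate projections onto the `y`- and `p`-blocks, so that for `X = α E₁ + β E₂` one has
`X(E₁) = E₁(X) = α E₁` and `X(E₂) = β E₂`.
-/

theorem sum_mul_pd (f : (m → ℝ) → ℝ) (z v : m → ℝ) :
    ∑ i, v i * pd f z i = fderiv ℝ f z v := by
  conv_rhs => rw [← Finset.univ_sum_single v]
  simp only [pd, map_sum]
  refine Finset.sum_congr rfl fun i _ => ?_
  rw [← smul_eq_mul, ← map_smul, ← Pi.single_smul, smul_eq_mul, mul_one]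

theorem covDeriv_eq_fderiv_add (Γ : (m → ℝ) → m → m → m → ℝ) (X Y : (m → ℝ) → m → ℝ)
    (z : m → ℝ) (k : m) :
    covDeriv Γ X Y z k = fderiv ℝ (fun w => Y w k) z (X z) + ∑ i, ∑ j, Γ z k i j * X z i * Y z j := by
  rw [covDeriv, sum_mul_pd]

theorem fderiv_mul_continuousLinearMap_apply {E : Type*} [NormedAddCommGroup E] [NormedSpace ℝ E]
    {f : E → ℝ} {z : E} (hf : DifferentiableAt ℝ f z) (L : E →L[ℝ] ℝ) (v : E) :
    fderiv ℝ (fun w => f w * L w) z v = fderiv ℝ f z v * L z + f z * L v := by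
  rw [fderiv_fun_mul hf L.differentiableAt, L.fderiv]
  simp only [add_apply, smul_apply, smul_eq_mul]
  ring

section Liouville

variable {n : ℕ}

def liouvilleE1L : ((Fin n ⊕ Fin n) → ℝ) →L[ℝ] ((Fin n ⊕ Fin n) → ℝ) :=
  ContinuousLinearMap.pi (Sum.elim (fun i => ContinuousLinearMap.proj (Sum.inl i)) 0)

def liouvilleE2L : ((Fin n ⊕ Fin n) → ℝ) →L[ℝ] ((Fin n ⊕ Fin n) → ℝ) :=
  ContinuousLinearMap.pi (Sum.elim 0 (fun i => ContinuousLinearMap.proj (Sum.inr i)))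

@[simp]
theorem coe_liouvilleE1L : ⇑(liouvilleE1L (n := n)) = liouvilleE1 := by
  funext z k; cases k <;> rfl

@[simp]
theorem coe_liouvilleE2L : ⇑(liouvilleE2L (n := n)) = liouvilleE2 := by
  funext z k; cases k <;> rfl

@[simp]
theorem liouvilleE1_liouvilleE1 (z : (Fin n ⊕ Fin n) → ℝ) :
    liouvilleE1 (liouvilleE1 z) = liouvilleE1 z := by
  funext k; cases k <;> rfl

@[simp]
theorem liouvilleE1_liouvilleE2 (z : (Fin n ⊕ Fin n) → ℝ) : liouvilleE1 (liouvilleE2 z) = 0 := by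
  funext k; cases k <;> rfl

@[simp]
theorem liouvilleE2_liouvilleE1 (z : (Fin n ⊕ Fin n) → ℝ) : liouvilleE2 (liouvilleE1 z) = 0 := by
  funext k; cases k <;> rfl

@[simp]
theorem liouvilleE2_liouvilleE2 (z : (Fin n ⊕ Fin n) → ℝ) :
    liouvilleE2 (liouvilleE2 z) = liouvilleE2 z := by
  funext k; cases k <;> rfl

def liouvilleSection (α β : ((Fin n ⊕ Fin n) → ℝ) → ℝ) (w : (Fin n ⊕ Fin n) → ℝ) :
    (Fin n ⊕ Fin n) → ℝ :=
  α w • liouvilleE1 w + β w • liouvilleE2 w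

theorem liouvilleSection_one_zero :
    liouvilleSection (fun _ => 1) (fun _ => 0) = liouvilleE1 (n := n) := by
  funext w; simp [liouvilleSection]

theorem liouvilleSection_zero_one :
    liouvilleSection (fun _ => 0) (fun _ => 1) = liouvilleE2 (n := n) := by
  funext w; simp [liouvilleSection]

theorem liouvilleE1_liouvilleSection (α β : ((Fin n ⊕ Fin n) → ℝ) → ℝ) (z : (Fin n ⊕ Fin n) → ℝ) :
    liouvilleE1 (liouvilleSection α β z) = α z • liouvilleE1 z := by
  rw [liouvilleSection, ← coe_liouvilleE1L]
  simp only [map_add, map_smul, coe_liouvilleE1L, liouvilleE1_liouvilleE1, liouvilleE1_liouvilleE2,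
    smul_zero, add_zero]

theorem liouvilleE2_liouvilleSection (α β : ((Fin n ⊕ Fin n) → ℝ) → ℝ) (z : (Fin n ⊕ Fin n) → ℝ) :
    liouvilleE2 (liouvilleSection α β z) = β z • liouvilleE2 z := by
  rw [liouvilleSection, ← coe_liouvilleE2L]
  simp only [map_add, map_smul, coe_liouvilleE2L, liouvilleE2_liouvilleE1, liouvilleE2_liouvilleE2,
    smul_zero, zero_add]

theorem fderiv_liouvilleSection_apply {α β : ((Fin n ⊕ Fin n) → ℝ) → ℝ} {z : (Fin n ⊕ Fin n) → ℝ}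
    (hα : DifferentiableAt ℝ α z) (hβ : DifferentiableAt ℝ β z) (v : (Fin n ⊕ Fin n) → ℝ)
    (k : Fin n ⊕ Fin n) :
    fderiv ℝ (fun w => liouvilleSection α β w k) z v =
      fderiv ℝ α z v * liouvilleE1 z k + α z * liouvilleE1 v k
        + (fderiv ℝ β z v * liouvilleE2 z k + β z * liouvilleE2 v k) := by
  set L₁ := (ContinuousLinearMap.proj k).comp (liouvilleE1L (n := n))
  set L₂ := (ContinuousLinearMap.proj k).comp (liouvilleE2L (n := n))
  have hL₁ : ∀ w, L₁ w = liouvilleE1 w k := fun w => by simp [L₁]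
  have hL₂ : ∀ w, L₂ w = liouvilleE2 w k := fun w => by simp [L₂]
  simp only [liouvilleSection, Pi.add_apply, Pi.smul_apply, smul_eq_mul, ← hL₁, ← hL₂]
  rw [fderiv_fun_add (hα.fun_mul L₁.differentiableAt) (hβ.fun_mul L₂.differentiableAt), add_apply,
    fderiv_mul_continuousLinearMap_apply hα, fderiv_mul_continuousLinearMap_apply hβ]

variable (Γ : ((Fin n ⊕ Fin n) → ℝ) → (Fin n ⊕ Fin n) → (Fin n ⊕ Fin n) → (Fin n ⊕ Fin n) → ℝ)

theorem sum_christoffel_mul_liouvilleSection_eq_zero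
    (hmix : ∀ (z : (Fin n ⊕ Fin n) → ℝ) (k : Fin n ⊕ Fin n) (i j : Fin n),
      Γ z k (Sum.inl i) (Sum.inr j) = 0 ∧ Γ z k (Sum.inr i) (Sum.inl j) = 0)
    (hΓy : ∀ (z : (Fin n ⊕ Fin n) → ℝ) (k : Fin n ⊕ Fin n) (i : Fin n),
      ∑ j, Γ z k (Sum.inl i) (Sum.inl j) * z (Sum.inl j) = 0)
    (hΓp : ∀ (z : (Fin n ⊕ Fin n) → ℝ) (k : Fin n ⊕ Fin n) (i : Fin n),
      ∑ j, Γ z k (Sum.inr i) (Sum.inr j) * z (Sum.inr j) = 0)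
    (γ δ : ((Fin n ⊕ Fin n) → ℝ) → ℝ) (z : (Fin n ⊕ Fin n) → ℝ) (k i : Fin n ⊕ Fin n) :
    ∑ j, Γ z k i j * liouvilleSection γ δ z j = 0 := by
  simp only [liouvilleSection, Pi.add_apply, Pi.smul_apply, smul_eq_mul, Fintype.sum_sum_type,
    liouvilleE1, liouvilleE2, mul_zero, add_zero, zero_add]
  cases i with
  | inl i =>
    simp only [(hmix z k i _).1, zero_mul, Finset.sum_const_zero, add_zero]
    rw [← mul_zero (γ z), ← hΓy z k i, Finset.mul_sum]
    exact Finset.sum_congr rfl fun j _ => by ring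
  | inr i =>
    simp only [(hmix z k i _).2, zero_mul, Finset.sum_const_zero, zero_add]
    rw [← mul_zero (δ z), ← hΓp z k i, Finset.mul_sum]
    exact Finset.sum_congr rfl fun j _ => by ring

theorem covDeriv_liouvilleSection
    (hmix : ∀ (z : (Fin n ⊕ Fin n) → ℝ) (k : Fin n ⊕ Fin n) (i j : Fin n),
      Γ z k (Sum.inl i) (Sum.inr j) = 0 ∧ Γ z k (Sum.inr i) (Sum.inl j) = 0)
    (hΓy : ∀ (z : (Fin n ⊕ Fin n) → ℝ) (k : Fin n ⊕ Fin n) (i : Fin n),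
      ∑ j, Γ z k (Sum.inl i) (Sum.inl j) * z (Sum.inl j) = 0)
    (hΓp : ∀ (z : (Fin n ⊕ Fin n) → ℝ) (k : Fin n ⊕ Fin n) (i : Fin n),
      ∑ j, Γ z k (Sum.inr i) (Sum.inr j) * z (Sum.inr j) = 0)
    (α β : ((Fin n ⊕ Fin n) → ℝ) → ℝ) {γ δ : ((Fin n ⊕ Fin n) → ℝ) → ℝ}
    {z : (Fin n ⊕ Fin n) → ℝ} (hγ : DifferentiableAt ℝ γ z) (hδ : DifferentiableAt ℝ δ z) :
    covDeriv Γ (liouvilleSection α β) (liouvilleSection γ δ) z =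
      (fderiv ℝ γ z (liouvilleSection α β z) + γ z * α z) • liouvilleE1 z
        + (fderiv ℝ δ z (liouvilleSection α β z) + δ z * β z) • liouvilleE2 z := by
  funext k
  have hΓ : ∑ i, ∑ j, Γ z k i j * liouvilleSection α β z i * liouvilleSection γ δ z j = 0 := by
    refine Finset.sum_eq_zero fun i _ => ?_
    rw [← mul_zero (liouvilleSection α β z i),
      ← sum_christoffel_mul_liouvilleSection_eq_zero Γ hmix hΓy hΓp γ δ z k i, Finset.mul_sum]
    exact Finset.sum_congr rfl fun j _ => by ring
  rw [covDeriv_eq_fderiv_add, hΓ, fderiv_liouvilleSection_apply hγ hδ,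
    congrFun (liouvilleE1_liouvilleSection α β z) k, congrFun (liouvilleE2_liouvilleSection α β z) k]
  simp only [Pi.add_apply, Pi.smul_apply, smul_eq_mul]
  ring

end Liouville

/-- `∇_{E₁}E₁ = E₁`, `∇_{E₁}E₂ = ∇_{E₂}E₁ = 0`, `∇_{E₂}E₂ = E₂`, and the
leaves of the foliation spanned by `{E₁,E₂}` are totally geodesic in the
leaves of the vertical foliation. -/
theorem liouville_fields_totally_geodesic {n : ℕ}
    (Γ : ((Fin n ⊕ Fin n) → ℝ) → (Fin n ⊕ Fin n) → (Fin n ⊕ Fin n) →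
      (Fin n ⊕ Fin n) → ℝ)
    -- mixed Christoffel symbols vanish
    (hmix : ∀ (z : (Fin n ⊕ Fin n) → ℝ) (k : Fin n ⊕ Fin n) (i j : Fin n),
      Γ z k (Sum.inl i) (Sum.inr j) = 0 ∧ Γ z k (Sum.inr i) (Sum.inl j) = 0)
    -- `Cᵏ_ij yʲ = 0` and `C^{ij}_k p_j = 0`
    (hΓy : ∀ (z : (Fin n ⊕ Fin n) → ℝ) (k : Fin n ⊕ Fin n) (i : Fin n),
      ∑ j, Γ z k (Sum.inl i) (Sum.inl j) * z (Sum.inl j) = 0)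
    (hΓp : ∀ (z : (Fin n ⊕ Fin n) → ℝ) (k : Fin n ⊕ Fin n) (i : Fin n),
      ∑ j, Γ z k (Sum.inr i) (Sum.inr j) * z (Sum.inr j) = 0) :
    (∀ (z : (Fin n ⊕ Fin n) → ℝ) (k : Fin n ⊕ Fin n),
      covDeriv Γ liouvilleE1 liouvilleE1 z k = liouvilleE1 z k) ∧
    (∀ (z : (Fin n ⊕ Fin n) → ℝ) (k : Fin n ⊕ Fin n),
      covDeriv Γ liouvilleE1 liouvilleE2 z k = 0) ∧
    (∀ (z : (Fin n ⊕ Fin n) → ℝ) (k : Fin n ⊕ Fin n),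
      covDeriv Γ liouvilleE2 liouvilleE1 z k = 0) ∧
    (∀ (z : (Fin n ⊕ Fin n) → ℝ) (k : Fin n ⊕ Fin n),
      covDeriv Γ liouvilleE2 liouvilleE2 z k = liouvilleE2 z k) ∧
    -- total geodesy: `∇_X Y` stays in the span of `{E₁, E₂}` for sections
    -- `X, Y` of that foliation with differentiable coefficients
    (∀ (α β γ' δ : ((Fin n ⊕ Fin n) → ℝ) → ℝ),
      Differentiable ℝ γ' → Differentiable ℝ δ →
      ∀ z : (Fin n ⊕ Fin n) → ℝ,
        (fun k => covDeriv Γ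
            (fun w a => α w * liouvilleE1 w a + β w * liouvilleE2 w a)
            (fun w a => γ' w * liouvilleE1 w a + δ w * liouvilleE2 w a) z k)
          ∈ Submodule.span ℝ {liouvilleE1 z, liouvilleE2 z}) := by
  have key := covDeriv_liouvilleSection Γ hmix hΓy hΓp
  have hconst (c : ℝ) {z : (Fin n ⊕ Fin n) → ℝ} : DifferentiableAt ℝ (fun _ => c) z :=
    differentiableAt_const c
  refine ⟨fun z k => ?_, fun z k => ?_, fun z k => ?_, fun z k => ?_, fun α β γ δ hγ hδ z => ?_⟩
  · conv_lhs => rw [← liouvilleSection_one_zero]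
    simp [key _ _ (hconst 1) (hconst 0)]
  · conv_lhs => rw [← liouvilleSection_one_zero, ← liouvilleSection_zero_one]
    simp [key _ _ (hconst 0) (hconst 1)]
  · conv_lhs => rw [← liouvilleSection_one_zero, ← liouvilleSection_zero_one]
    simp [key _ _ (hconst 1) (hconst 0)]
  · conv_lhs => rw [← liouvilleSection_zero_one]
    simp [key _ _ (hconst 0) (hconst 1)]
  · exact Submodule.mem_span_pair.2 ⟨_, _, (key α β (hγ z) (hδ z)).symm⟩
end

section
/- For E' = K²E₁ − F²E₂ one has ∇_{E'}E' = −K²F² E + (K² − F²) E', which is not a section of the line distribution spanned by E' (whenever FK ≠ 0); hence integral curves of E' are not geodesics of leaves of the vertical foliation. -/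
/-! Because `Γ` has no mixed `y`–`p` components and annihilates `E₁` and `E₂` in its second
slot, the covariant derivative of any field `a E₁ − b E₂` reduces to its ordinary directional
derivative, and `E₁`, `E₂` are linear. The homogeneity of `F²` and `K²` then gives
`E'(K²) = −2F²K²` and `E'(F²) = 2K²F²`, whence the formula for `∇_{E'}E'`. In the basis
`(E₁, E₂)`, the coefficient determinant of `∇_{E'}E'` and `E'` is `K²F²(K² + F²) ≠ 0`, so the two
are not proportional. -/

open scoped BigOperators

variable {m : Type*} [Fintype m] [DecidableEq m]

lemma sum_mul_pd_eq_fderiv (f : (m → ℝ) → ℝ) (z x : m → ℝ) :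
    ∑ i, x i * pd f z i = fderiv ℝ f z x := by
  conv_rhs => rw [pi_eq_sum_univ' x]
  simp [pd, map_sum]

lemma fderiv_mul_apply {ι : Type*} [Fintype ι] {f : (ι → ℝ) → ℝ} {z : ι → ℝ}
    (hf : DifferentiableAt ℝ f z) (k : ι) (v : ι → ℝ) :
    fderiv ℝ (fun w => f w * w k) z v = fderiv ℝ f z v * z k + f z * v k := by
  have hd : HasFDerivAt (fun w => f w * w k)
      (f z • ContinuousLinearMap.proj k + z k • fderiv ℝ f z) z :=
    hf.hasFDerivAt.mul (hasFDerivAt_apply k z)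
  rw [hd.fderiv]
  simp only [add_apply, smul_apply, ContinuousLinearMap.proj_apply, smul_eq_mul]
  ring

lemma LinearIndependent.mul_eq_mul_of_mem_span_pair {R V : Type*} [CommRing R] [AddCommGroup V]
    [Module R V] {e₁ e₂ : V} (h : LinearIndependent R ![e₁, e₂]) {p q r s : R}
    (hmem : p • e₁ + q • e₂ ∈ Submodule.span R {r • e₁ + s • e₂}) : p * s = q * r := by
  obtain ⟨c, hc⟩ := Submodule.mem_span_singleton.mp hmem
  rw [smul_add, smul_smul, smul_smul] at hc
  obtain ⟨rfl, rfl⟩ := h.eq_of_pair hc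
  ring

section Liouville

variable {n : ℕ}

lemma liouvilleE1_add_liouvilleE2 (z : (Fin n ⊕ Fin n) → ℝ) (k : Fin n ⊕ Fin n) :
    liouvilleE1 z k + liouvilleE2 z k = z k := by
  cases k <;> simp [liouvilleE1, liouvilleE2]

lemma liouvilleE1_comb (z : (Fin n ⊕ Fin n) → ℝ) (a b : ℝ) (k : Fin n ⊕ Fin n) :
    liouvilleE1 (fun j => a * liouvilleE1 z j - b * liouvilleE2 z j) k = a * liouvilleE1 z k := by
  cases k <;> simp [liouvilleE1, liouvilleE2]

lemma liouvilleE2_comb (z : (Fin n ⊕ Fin n) → ℝ) (a b : ℝ) (k : Fin n ⊕ Fin n) :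
    liouvilleE2 (fun j => a * liouvilleE1 z j - b * liouvilleE2 z j) k = -b * liouvilleE2 z k := by
  cases k <;> simp [liouvilleE1, liouvilleE2]

lemma fderiv_apply_comb (f : ((Fin n ⊕ Fin n) → ℝ) → ℝ) (z : (Fin n ⊕ Fin n) → ℝ) (a b : ℝ) :
    fderiv ℝ f z (fun j => a * liouvilleE1 z j - b * liouvilleE2 z j)
      = a * fderiv ℝ f z (liouvilleE1 z) - b * fderiv ℝ f z (liouvilleE2 z) := by
  rw [show (fun j => a * liouvilleE1 z j - b * liouvilleE2 z j)
      = a • liouvilleE1 z - b • liouvilleE2 z from rfl, map_sub, map_smul, map_smul,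
    smul_eq_mul, smul_eq_mul]

lemma fderiv_comb_apply {a b : ((Fin n ⊕ Fin n) → ℝ) → ℝ} {z : (Fin n ⊕ Fin n) → ℝ}
    (ha : DifferentiableAt ℝ a z) (hb : DifferentiableAt ℝ b z) (k : Fin n ⊕ Fin n)
    (v : (Fin n ⊕ Fin n) → ℝ) :
    fderiv ℝ (fun w => a w * liouvilleE1 w k - b w * liouvilleE2 w k) z v
      = fderiv ℝ a z v * liouvilleE1 z k + a z * liouvilleE1 v k
        - (fderiv ℝ b z v * liouvilleE2 z k + b z * liouvilleE2 v k) := by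
  cases k with
  | inl i => simp [liouvilleE1, liouvilleE2, fderiv_mul_apply ha]
  | inr i => simp [liouvilleE1, liouvilleE2, fderiv_mul_apply hb]

end Liouville

section Christoffel

variable {n : ℕ} {Γ : ((Fin n ⊕ Fin n) → ℝ) → (Fin n ⊕ Fin n) → (Fin n ⊕ Fin n) →
      (Fin n ⊕ Fin n) → ℝ}

lemma sum_christoffel_mul_comb_eq_zero (z : (Fin n ⊕ Fin n) → ℝ) (k : Fin n ⊕ Fin n)
    (hmix : ∀ i j : Fin n, Γ z k (Sum.inl i) (Sum.inr j) = 0 ∧ Γ z k (Sum.inr i) (Sum.inl j) = 0)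
    (hΓy : ∀ i : Fin n, ∑ j, Γ z k (Sum.inl i) (Sum.inl j) * z (Sum.inl j) = 0)
    (hΓp : ∀ i : Fin n, ∑ j, Γ z k (Sum.inr i) (Sum.inr j) * z (Sum.inr j) = 0)
    (i : Fin n ⊕ Fin n) (a b : ℝ) :
    ∑ j, Γ z k i j * (a * liouvilleE1 z j - b * liouvilleE2 z j) = 0 := by
  rw [Fintype.sum_sum_type]
  cases i with
  | inl i =>
    simp [liouvilleE1, liouvilleE2, (hmix i _).1, mul_left_comm _ a, ← Finset.mul_sum, hΓy]
  | inr i =>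
    simp [liouvilleE1, liouvilleE2, (hmix i _).2, mul_left_comm _ b, ← Finset.mul_sum, hΓp]

lemma covDeriv_comb_eq_fderiv
    (X : ((Fin n ⊕ Fin n) → ℝ) → (Fin n ⊕ Fin n) → ℝ) (a b : ((Fin n ⊕ Fin n) → ℝ) → ℝ)
    (z : (Fin n ⊕ Fin n) → ℝ) (k : Fin n ⊕ Fin n)
    (hΓ : ∀ i, ∑ j, Γ z k i j * (a z * liouvilleE1 z j - b z * liouvilleE2 z j) = 0) :
    covDeriv Γ X (fun w j => a w * liouvilleE1 w j - b w * liouvilleE2 w j) z k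
      = fderiv ℝ (fun w => a w * liouvilleE1 w k - b w * liouvilleE2 w k) z (X z) := by
  have hΓX : ∑ i, ∑ j, Γ z k i j * X z i * (a z * liouvilleE1 z j - b z * liouvilleE2 z j) = 0 :=
    Finset.sum_eq_zero fun i _ => by
      simp_rw [mul_right_comm _ (X z i), ← Finset.sum_mul, hΓ, zero_mul]
  rw [covDeriv, hΓX, add_zero, sum_mul_pd_eq_fderiv]

end Christoffel

lemma covDeriv_liouvilleEprime_self {n : ℕ}
    {Γ : ((Fin n ⊕ Fin n) → ℝ) → (Fin n ⊕ Fin n) → (Fin n ⊕ Fin n) → (Fin n ⊕ Fin n) → ℝ}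
    {F2 K2 : ((Fin n ⊕ Fin n) → ℝ) → ℝ} (z : (Fin n ⊕ Fin n) → ℝ) (k : Fin n ⊕ Fin n)
    (hmix : ∀ i j : Fin n, Γ z k (Sum.inl i) (Sum.inr j) = 0 ∧ Γ z k (Sum.inr i) (Sum.inl j) = 0)
    (hΓy : ∀ i : Fin n, ∑ j, Γ z k (Sum.inl i) (Sum.inl j) * z (Sum.inl j) = 0)
    (hΓp : ∀ i : Fin n, ∑ j, Γ z k (Sum.inr i) (Sum.inr j) * z (Sum.inr j) = 0)
    (hF2diff : DifferentiableAt ℝ F2 z) (hK2diff : DifferentiableAt ℝ K2 z)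
    (hF2E1 : fderiv ℝ F2 z (liouvilleE1 z) = 2 * F2 z)
    (hF2E2 : fderiv ℝ F2 z (liouvilleE2 z) = 0)
    (hK2E1 : fderiv ℝ K2 z (liouvilleE1 z) = 0)
    (hK2E2 : fderiv ℝ K2 z (liouvilleE2 z) = 2 * K2 z) :
    covDeriv Γ
        (fun w a => K2 w * liouvilleE1 w a - F2 w * liouvilleE2 w a)
        (fun w a => K2 w * liouvilleE1 w a - F2 w * liouvilleE2 w a) z k
      = -(K2 z * F2 z) * z k
          + (K2 z - F2 z) * (K2 z * liouvilleE1 z k - F2 z * liouvilleE2 z k) := by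
  rw [covDeriv_comb_eq_fderiv _ _ _ z k (sum_christoffel_mul_comb_eq_zero z k hmix hΓy hΓp · _ _),
    fderiv_comb_apply hK2diff hF2diff,
    liouvilleE1_comb, liouvilleE2_comb, fderiv_apply_comb, fderiv_apply_comb,
    hF2E1, hF2E2, hK2E1, hK2E2, ← liouvilleE1_add_liouvilleE2 z k]
  ring

/-- For `E' = K²E₁ − F²E₂` one has
`∇_{E'}E' = −K²F² E + (K² − F²) E'`, which does not lie in the line spanned by
`E'` (when `FK ≠ 0`); hence integral curves of `E'` are not geodesics of
leaves of the vertical foliation. -/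
theorem liouville_Eprime_not_geodesic {n : ℕ}
    (Γ : ((Fin n ⊕ Fin n) → ℝ) → (Fin n ⊕ Fin n) → (Fin n ⊕ Fin n) →
      (Fin n ⊕ Fin n) → ℝ)
    (F2 K2 : ((Fin n ⊕ Fin n) → ℝ) → ℝ)
    (hmix : ∀ (z : (Fin n ⊕ Fin n) → ℝ) (k : Fin n ⊕ Fin n) (i j : Fin n),
      Γ z k (Sum.inl i) (Sum.inr j) = 0 ∧ Γ z k (Sum.inr i) (Sum.inl j) = 0)
    (hΓy : ∀ (z : (Fin n ⊕ Fin n) → ℝ) (k : Fin n ⊕ Fin n) (i : Fin n),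
      ∑ j, Γ z k (Sum.inl i) (Sum.inl j) * z (Sum.inl j) = 0)
    (hΓp : ∀ (z : (Fin n ⊕ Fin n) → ℝ) (k : Fin n ⊕ Fin n) (i : Fin n),
      ∑ j, Γ z k (Sum.inr i) (Sum.inr j) * z (Sum.inr j) = 0)
    (hF2diff : Differentiable ℝ F2) (hK2diff : Differentiable ℝ K2)
    -- homogeneity: `E₁(F²) = 2F²`, `E₂(F²) = 0`, `E₁(K²) = 0`, `E₂(K²) = 2K²`
    (hF2E1 : ∀ z, fderiv ℝ F2 z (liouvilleE1 z) = 2 * F2 z)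
    (hF2E2 : ∀ z, fderiv ℝ F2 z (liouvilleE2 z) = 0)
    (hK2E1 : ∀ z, fderiv ℝ K2 z (liouvilleE1 z) = 0)
    (hK2E2 : ∀ z, fderiv ℝ K2 z (liouvilleE2 z) = 2 * K2 z) :
    -- `∇_{E'}E' = −K²F² E + (K² − F²) E'`
    (∀ (z : (Fin n ⊕ Fin n) → ℝ) (k : Fin n ⊕ Fin n),
      covDeriv Γ
          (fun w a => K2 w * liouvilleE1 w a - F2 w * liouvilleE2 w a)
          (fun w a => K2 w * liouvilleE1 w a - F2 w * liouvilleE2 w a) z k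
        = -(K2 z * F2 z) * z k
            + (K2 z - F2 z) * (K2 z * liouvilleE1 z k - F2 z * liouvilleE2 z k)) ∧
    -- `∇_{E'}E'` is not a section of the line distribution `{E'}`
    (∀ z : (Fin n ⊕ Fin n) → ℝ, 0 < F2 z → 0 < K2 z →
      LinearIndependent ℝ ![liouvilleE1 z, liouvilleE2 z] →
      (fun k => covDeriv Γ
          (fun w a => K2 w * liouvilleE1 w a - F2 w * liouvilleE2 w a)
          (fun w a => K2 w * liouvilleE1 w a - F2 w * liouvilleE2 w a) z k)
        ∉ Submodule.span ℝ
            {fun k => K2 z * liouvilleE1 z k - F2 z * liouvilleE2 z k}) := by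
  have hE' z k := covDeriv_liouvilleEprime_self z k (hmix z k) (hΓy z k) (hΓp z k) (hF2diff z)
    (hK2diff z) (hF2E1 z) (hF2E2 z) (hK2E1 z) (hK2E2 z)
  refine ⟨hE', fun z hF hK hli hmem => ?_⟩
  have hcov : (fun k => covDeriv Γ
      (fun w a => K2 w * liouvilleE1 w a - F2 w * liouvilleE2 w a)
      (fun w a => K2 w * liouvilleE1 w a - F2 w * liouvilleE2 w a) z k)
      = (K2 z * K2 z - 2 * (K2 z * F2 z)) • liouvilleE1 z
        + (F2 z * F2 z - 2 * (K2 z * F2 z)) • liouvilleE2 z := by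
    funext k
    simp only [hE', ← liouvilleE1_add_liouvilleE2 z k, Pi.add_apply, Pi.smul_apply, smul_eq_mul]
    ring
  have hEprime : (fun k => K2 z * liouvilleE1 z k - F2 z * liouvilleE2 z k)
      = K2 z • liouvilleE1 z + (-F2 z) • liouvilleE2 z := by
    funext k
    simp only [Pi.add_apply, Pi.smul_apply, smul_eq_mul]
    ring
  rw [hcov, hEprime] at hmem
  have hdet := hli.mul_eq_mul_of_mem_span_pair hmem
  nlinarith [mul_pos (mul_pos hK hF) (add_pos hK hF)]
end
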